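/- arXiv:1502.00830 — 6 statements merged into one kernel-verified Lean document; each statement's English description precedes it below -/
import Mathlib

section
/- Let K be a field, v a nontrivial valuation on K with valuation ring A_v, maximal ideal M_v, and let T = (1 + M_v)·K*². Then for every x ∈ K*, both T and x·T are contained in the set T + x·T := {t₁ + x·t₂ : t₁, t₂ ∈ T}. -/
/-!
Pick `c ≠ 0` with `v (x c²) < 1`, which nontriviality of `v` allows. Then `w = 1 - x c²` is a
principal unit, and the identity `1 = w + x c²` splits every `t ∈ T` as `t = w t + x (t c²)` and
`x t` as `x t = t (x c)² + x (w t)`; all four summands lie in `T` because `T` is stable under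
multiplication by principal units and by nonzero squares.
-/

namespace Valuation

variable {K Γ₀ : Type*} [Field K] [LinearOrderedCommGroupWithZero Γ₀] (v : Valuation K Γ₀)

def principalUnitsMulSquares : Set K :=
  {t : K | ∃ u c : K, v (u - 1) < 1 ∧ c ≠ 0 ∧ t = u * c ^ 2}

theorem exists_ne_zero_mul_sq_lt_one [v.IsNontrivial] (x : K) :
    ∃ c ≠ 0, v (x * c ^ 2) < 1 := by
  obtain ⟨π, hπ0, hπ1⟩ := IsNontrivial.exists_lt_one (v := v)
  rcases le_or_gt (v x) 1 with hx | hx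
  · refine ⟨π, hπ0, ?_⟩
    rw [map_mul, map_pow]
    calc v x * v π ^ 2 ≤ v π ^ 2 := mul_le_of_le_one_left' hx
      _ < 1 := pow_lt_one₀ zero_le hπ1 two_ne_zero
  · have hx0 : x ≠ 0 := v.ne_zero_iff.mp (ne_of_gt (zero_lt_one.trans hx))
    refine ⟨x⁻¹, inv_ne_zero hx0, ?_⟩
    rw [sq, ← mul_assoc, mul_inv_cancel₀ hx0, one_mul, map_inv₀]
    exact inv_lt_one_of_one_lt₀ hx

variable {v}

theorem mul_sub_one_lt_one {u w : K} (hu : v (u - 1) < 1) (hw : v (w - 1) < 1) :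
    v (u * w - 1) < 1 := by
  have hu_one : v u = 1 := by
    simpa using v.map_one_add_of_lt hu
  rw [show u * w - 1 = u * (w - 1) + (u - 1) by ring]
  refine (v.map_add _ _).trans_lt (max_lt ?_ hu)
  rwa [map_mul, hu_one, one_mul]

theorem mul_mem_principalUnitsMulSquares {w t : K} (hw : v (w - 1) < 1)
    (ht : t ∈ v.principalUnitsMulSquares) : w * t ∈ v.principalUnitsMulSquares := by
  obtain ⟨u, a, hu, ha, rfl⟩ := ht
  exact ⟨w * u, a, mul_sub_one_lt_one hw hu, ha, by ring⟩

theorem mul_sq_mem_principalUnitsMulSquares {t c : K} (ht : t ∈ v.principalUnitsMulSquares)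
    (hc : c ≠ 0) : t * c ^ 2 ∈ v.principalUnitsMulSquares := by
  obtain ⟨u, a, hu, ha, rfl⟩ := ht
  exact ⟨u, a * c, hu, mul_ne_zero ha hc, by ring⟩

end Valuation

/-- For `T = (1 + M_v)·K*²` with `v` a nontrivial valuation, for every `x ∈ K*`,
both `T` and `x·T` are contained in `T + x·T`. -/
theorem stmt_2 {K Γ₀ : Type*} [Field K] [LinearOrderedCommGroupWithZero Γ₀]
    (v : Valuation K Γ₀) (hv : ∃ p : K, p ≠ 0 ∧ v p ≠ 1)
    (T : Set K)
    (hT : T = {t : K | ∃ u c : K, v (u - 1) < 1 ∧ c ≠ 0 ∧ t = u * c ^ 2})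
    (x : K) (hx : x ≠ 0) :
    (∀ t ∈ T, ∃ t₁ ∈ T, ∃ t₂ ∈ T, t = t₁ + x * t₂) ∧
    (∀ t ∈ T, ∃ t₁ ∈ T, ∃ t₂ ∈ T, x * t = t₁ + x * t₂) := by
  obtain ⟨p, hp0, hp1⟩ := hv
  have : v.IsNontrivial := Valuation.isNontrivial_iff_exists_unit.mpr ⟨Units.mk0 p hp0, hp1⟩
  obtain ⟨c, hc0, hxc⟩ := v.exists_ne_zero_mul_sq_lt_one x
  have hw : v ((1 - x * c ^ 2) - 1) < 1 := by
    rwa [sub_sub_cancel_left, Valuation.map_neg]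
  change T = v.principalUnitsMulSquares at hT
  subst hT
  refine ⟨fun t ht => ?_, fun t ht => ?_⟩
  · exact ⟨(1 - x * c ^ 2) * t, Valuation.mul_mem_principalUnitsMulSquares hw ht,
      t * c ^ 2, Valuation.mul_sq_mem_principalUnitsMulSquares ht hc0, by ring⟩
  · exact ⟨t * (x * c) ^ 2, Valuation.mul_sq_mem_principalUnitsMulSquares ht (mul_ne_zero hx hc0),
      (1 - x * c ^ 2) * t, Valuation.mul_mem_principalUnitsMulSquares hw ht, by ring⟩
end

section
/- Let K be a field, v a nontrivial valuation on K, and T = (1 + M_v)·K*². Then K = T - T, i.e., every element of K is a difference of two elements of T. -/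
/-!
Choose `c ≠ 0` with `v y < v (c²)`, which nontriviality allows. Then `1 + y / c²` is a principal
unit, and `y = (1 + y / c²) c² - 1 · c²`.
-/

namespace Valuation

variable {K Γ₀ : Type*} [Field K] [LinearOrderedCommGroupWithZero Γ₀] (v : Valuation K Γ₀)

variable {v}

theorem sq_add_mem_principalUnitsMulSquares {c x : K} (hc : c ≠ 0) (hx : v x < v (c ^ 2)) :
    c ^ 2 + x ∈ v.principalUnitsMulSquares := by
  have hc2 : c ^ 2 ≠ 0 := pow_ne_zero 2 hc
  refine ⟨1 + x / c ^ 2, c, ?_, hc, by field_simp⟩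
  rwa [add_sub_cancel_left, map_div₀, div_lt_one₀ (zero_lt_iff.mpr (v.ne_zero_iff.mpr hc2))]

theorem sq_mem_principalUnitsMulSquares {c : K} (hc : c ≠ 0) :
    c ^ 2 ∈ v.principalUnitsMulSquares := by
  simpa using sq_add_mem_principalUnitsMulSquares (v := v) hc (x := 0)
    (by simpa [zero_lt_iff] using hc)

theorem IsNontrivial.exists_lt_val_sq [v.IsNontrivial] (y : K) : ∃ c ≠ 0, v y < v (c ^ 2) := by
  obtain ⟨q, hq⟩ := IsNontrivial.exists_one_lt (v := v)
  have hq0 : q ≠ 0 := by rintro rfl; simp at hq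
  rcases le_or_gt (v y) 1 with hy | hy
  · exact ⟨q, hq0, hy.trans_lt (by simpa using one_lt_pow₀ hq two_ne_zero)⟩
  · have hy0 : y ≠ 0 := by rintro rfl; simp at hy
    have hyq : 1 < v (y * q) := by simpa using one_lt_mul'' hy hq
    refine ⟨y * q, mul_ne_zero hy0 hq0, ?_⟩
    calc v y < v y * v q := lt_mul_of_one_lt_right (zero_lt_one.trans hy) hq
      _ = v (y * q) := (map_mul v y q).symm
      _ < v (y * q) ^ 2 := lt_self_pow₀ hyq one_lt_two
      _ = v ((y * q) ^ 2) := (map_pow v _ 2).symm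

theorem IsNontrivial.principalUnitsMulSquares_sub [v.IsNontrivial] (y : K) :
    ∃ t₁ ∈ v.principalUnitsMulSquares, ∃ t₂ ∈ v.principalUnitsMulSquares, y = t₁ - t₂ := by
  obtain ⟨c, hc, hyc⟩ := IsNontrivial.exists_lt_val_sq (v := v) y
  exact ⟨c ^ 2 + y, sq_add_mem_principalUnitsMulSquares hc hyc, c ^ 2,
    sq_mem_principalUnitsMulSquares hc, by ring⟩

end Valuation

/-- For `T = (1 + M_v)·K*²` with `v` a nontrivial valuation, `K = T - T`. -/
theorem stmt_3 {K Γ₀ : Type*} [Field K] [LinearOrderedCommGroupWithZero Γ₀]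
    (v : Valuation K Γ₀) (hv : ∃ p : K, p ≠ 0 ∧ v p ≠ 1)
    (T : Set K)
    (hT : T = {t : K | ∃ u c : K, v (u - 1) < 1 ∧ c ≠ 0 ∧ t = u * c ^ 2}) :
    ∀ y : K, ∃ t₁ ∈ T, ∃ t₂ ∈ T, y = t₁ - t₂ := by
  obtain ⟨p, hp0, hp1⟩ := hv
  have : v.IsNontrivial := ⟨p, v.ne_zero_iff.mpr hp0, hp1⟩
  subst hT
  exact Valuation.IsNontrivial.principalUnitsMulSquares_sub
end

section
/- Let K be a field, v a valuation on K with unit group U_v and maximal ideal M_v, and let T = (1+M_v)·K*². If x ∈ K* satisfies x ∉ U_v·K*², then x is T-rigid: every element of T + x·T lies in T ∪ x·T. -/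
lemma vu_one' {K Γ₀ : Type*} [Field K] [LinearOrderedCommGroupWithZero Γ₀]
    (v : Valuation K Γ₀) {u : K} (h : v (u - 1) < 1) : v u = 1 := by
  have := Valuation.map_add_eq_of_lt_left v (y := u - 1) (x := (1:K)) (by simpa using h)
  simpa using this

lemma dlt {Γ₀ : Type*} [LinearOrderedCommGroupWithZero Γ₀] {a b : Γ₀} (ha : a < b) (hb : b ≠ 0) :
    a / b < 1 := by
  rw [div_lt_iff₀ (lt_of_le_of_ne zero_le' (Ne.symm hb))]; simpa using ha

/-- If `x ∉ U_v·K*²` then `x` is `T`-rigid for `T = (1+M_v)·K*²`: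
every element of `T + x·T` lies in `T ∪ x·T`. -/
theorem stmt_4 {K Γ₀ : Type*} [Field K] [LinearOrderedCommGroupWithZero Γ₀]
    (v : Valuation K Γ₀) (T : Set K)
    (hT : T = {t : K | ∃ u c : K, v (u - 1) < 1 ∧ c ≠ 0 ∧ t = u * c ^ 2})
    (x : K) (hx : x ≠ 0)
    (hxnb : ¬ ∃ u c : K, v u = 1 ∧ c ≠ 0 ∧ x = u * c ^ 2) :
    ∀ t₁ ∈ T, ∀ t₂ ∈ T, (t₁ + x * t₂ ∈ T ∨ ∃ t ∈ T, t₁ + x * t₂ = x * t) := by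
  -- key: v x ≠ (v c)^2 for c ≠ 0
  have key : ∀ c : K, c ≠ 0 → v x ≠ v c ^ 2 := by
    intro c hc hvx
    apply hxnb
    refine ⟨x / c ^ 2, c, ?_, hc, by field_simp⟩
    have hc2 : v (c ^ 2) ≠ 0 := by
      simp [pow_eq_zero_iff, hc]
    rw [v.map_div, v.map_pow, ← hvx]
    exact div_self (v.ne_zero_iff.mpr hx)
  subst hT
  rintro t₁ ⟨u₁, c₁, hu₁, hc₁, rfl⟩ t₂ ⟨u₂, c₂, hu₂, hc₂, rfl⟩
  have hvu₁ : v u₁ = 1 := vu_one' v hu₁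
  have hvu₂ : v u₂ = 1 := vu_one' v hu₂
  have hu₁0 : u₁ ≠ 0 := by intro h; rw [h] at hvu₁; simp at hvu₁
  have hu₂0 : u₂ ≠ 0 := by intro h; rw [h] at hvu₂; simp at hvu₂
  set a := v (u₁ * c₁ ^ 2) with ha
  set b := v (x * (u₂ * c₂ ^ 2)) with hb
  have haval : a = v c₁ ^ 2 := by rw [ha, v.map_mul, hvu₁, v.map_pow, one_mul]
  have hbval : b = v x * v c₂ ^ 2 := by
    rw [hb, v.map_mul, v.map_mul, hvu₂, v.map_pow, one_mul]
  have ha0 : a ≠ 0 := by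
    simp [ha, v.zero_iff, hu₁0, hc₁]
  have hb0 : b ≠ 0 := by
    simp [hb, v.zero_iff, hu₂0, hc₂, hx]
  have hab : a ≠ b := by
    intro h
    apply key (c₁ / c₂) (div_ne_zero hc₁ hc₂)
    have hc₂0 : v c₂ ^ 2 ≠ 0 := by simp [v.zero_iff, hc₂]
    rw [v.map_div, div_pow, eq_div_iff hc₂0]
    rw [haval, hbval] at h
    exact h.symm
  rcases hab.lt_or_gt with hlt | hlt
  · -- a < b : result is x * t
    right
    refine ⟨(u₂ + u₁ * c₁ ^ 2 / (x * c₂ ^ 2)) * c₂ ^ 2, ⟨_, c₂, ?_, hc₂, rfl⟩, ?_⟩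
    · have h1 : v (u₁ * c₁ ^ 2 / (x * c₂ ^ 2)) < 1 := by
        rw [v.map_div]
        have : v (x * c₂ ^ 2) = b := by
          rw [hbval, v.map_mul, v.map_pow]
        rw [this]
        exact dlt (ha ▸ hlt) hb0
      have := v.map_add (u₂ - 1) (u₁ * c₁ ^ 2 / (x * c₂ ^ 2))
      calc v (u₂ + u₁ * c₁ ^ 2 / (x * c₂ ^ 2) - 1)
          = v ((u₂ - 1) + u₁ * c₁ ^ 2 / (x * c₂ ^ 2)) := by ring_nf
        _ ≤ max (v (u₂ - 1)) (v (u₁ * c₁ ^ 2 / (x * c₂ ^ 2))) := v.map_add _ _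
        _ < 1 := max_lt hu₂ h1
    · field_simp
      try ring
  · -- b < a : result in T
    left
    refine ⟨u₁ + x * (u₂ * c₂ ^ 2) / c₁ ^ 2, c₁, ?_, hc₁, ?_⟩
    · have h1 : v (x * (u₂ * c₂ ^ 2) / c₁ ^ 2) < 1 := by
        rw [v.map_div]
        have : v (c₁ ^ 2) = a := by rw [haval, v.map_pow]
        rw [this]
        exact dlt (hb ▸ hlt) ha0
      calc v (u₁ + x * (u₂ * c₂ ^ 2) / c₁ ^ 2 - 1)
          = v ((u₁ - 1) + x * (u₂ * c₂ ^ 2) / c₁ ^ 2) := by ring_nf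
        _ ≤ max (v (u₁ - 1)) (v (x * (u₂ * c₂ ^ 2) / c₁ ^ 2)) := v.map_add _ _
        _ < 1 := max_lt hu₁ h1
    · field_simp
      try ring
end

section
/- Let K be a field with two independent (nontrivial, with no common proper coarsening) valuations v and w, and suppose there exists p ∈ K* with v(p) ∉ 2Γ_v. Then (1 + M_w)·K*² is not contained in (1 + M_v)·K*². -/
/-- If `v, w` are independent nontrivial valuations on `K` (so the approximation
theorem holds for them) and some `p ∈ K*` has `v p ∉ 2Γ_v`, then
`(1+M_w)K*² ⊄ (1+M_v)K*²`. -/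
theorem stmt_7 {K Γ₀ : Type*} [Field K] [LinearOrderedCommGroupWithZero Γ₀]
    (v w : Valuation K Γ₀)
    (hv : ∃ p : K, p ≠ 0 ∧ v p ≠ 1) (hw : ∃ p : K, p ≠ 0 ∧ w p ≠ 1)
    (happrox : ∀ x₀ y₀ : K, ∀ γ δ : Γ₀, γ ≠ 0 → δ ≠ 0 →
      ∃ x : K, v (x - x₀) < γ ∧ w (x - y₀) < δ)
    (p : K) (hp : p ≠ 0) (hpodd : ¬ ∃ g : Γ₀, v p = g ^ 2) :
    ¬ ({t : K | ∃ u c : K, w (u - 1) < 1 ∧ c ≠ 0 ∧ t = u * c ^ 2} ⊆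
       {t : K | ∃ u c : K, v (u - 1) < 1 ∧ c ≠ 0 ∧ t = u * c ^ 2}) := by
  intro hsub
  have hvp : v p ≠ 0 := by simpa using hp
  obtain ⟨x, hx1, hx2⟩ := happrox p 1 (v p) 1 hvp one_ne_zero
  have hvx : v x = v p := by
    have : v (p + (x - p)) = v p := Valuation.map_add_eq_of_lt_left v hx1
    simpa using this
  have hmem : x ∈ {t : K | ∃ u c : K, w (u - 1) < 1 ∧ c ≠ 0 ∧ t = u * c ^ 2} :=
    ⟨x, 1, hx2, one_ne_zero, by ring⟩
  obtain ⟨u, c, hu, hc, hxe⟩ := hsub hmem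
  have hvu : v u = 1 := by
    have : v (1 + (u - 1)) = v 1 := Valuation.map_add_eq_of_lt_left v (by simpa using hu)
    simpa using this
  exact hpodd ⟨v c, by rw [← hvx, hxe, map_mul, map_pow, hvu, one_mul]⟩
end

section
/- Let v be a valuation on a field K and T = (1 + M_v)·K*². Then the map U_v·K*²/T → K_v*/K_v*² induced by sending the class of a unit x ∈ U_v to the class of its residue π(x) is a well-defined group isomorphism. -/
open IsLocalRing QuotientGroup

/-- The residue map induces a group isomorphism `U_v·K*²/T ≅ K_v*/K_v*²` where
`T = (1+M_v)·K*²`. -/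
theorem stmt_18 {K Γ₀ : Type*} [Field K] [LinearOrderedCommGroupWithZero Γ₀]
    (v : Valuation K Γ₀)
    (Uv : Subgroup Kˣ) (hUv : Uv = (Units.map v.toMonoidWithZeroHom.toMonoidHom).ker)
    (Sq : Subgroup Kˣ) (hSq : Sq = (powMonoidHom 2 : Kˣ →* Kˣ).range)
    (H : Subgroup Kˣ) (hH : H = Uv ⊔ Sq)
    (T : Subgroup Kˣ)
    (hTdef : T = Subgroup.closure {u : Kˣ | v ((u : K) - 1) < 1} ⊔ Sq) :
    ∃ e : (H ⧸ T.subgroupOf H) ≃*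
        ((IsLocalRing.ResidueField v.valuationSubring)ˣ ⧸
          (powMonoidHom 2 :
            (IsLocalRing.ResidueField v.valuationSubring)ˣ →* _).range),
      ∀ (x : Kˣ) (hx : v (x : K) = 1) (hmem : x ∈ H)
        (y : (IsLocalRing.ResidueField v.valuationSubring)ˣ),
        (y : IsLocalRing.ResidueField v.valuationSubring) =
          IsLocalRing.residue v.valuationSubring
            ⟨(x : K), (v.mem_valuationSubring_iff _).mpr hx.le⟩ →
        e (QuotientGroup.mk ⟨x, hmem⟩) = QuotientGroup.mk y := by
  subst hTdef hH hSq hUv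
  set A := v.valuationSubring with hA
  -- identify the kernel with the unit group of the valuation subring
  have hUeq : (Units.map v.toMonoidWithZeroHom.toMonoidHom).ker = A.unitGroup := by
    ext x
    rw [MonoidHom.mem_ker, Valuation.mem_unitGroup_iff, Units.ext_iff]
    rfl
  -- identify the closure with the principal unit group
  have hset : {u : Kˣ | v ((u : K) - 1) < 1} = (A.principalUnitGroup : Set Kˣ) := by
    ext u
    exact (Valuation.isEquiv_valuation_valuationSubring v).val_sub_one_lt_one_iff
  have hW : Subgroup.closure {u : Kˣ | v ((u : K) - 1) < 1} = A.principalUnitGroup := by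
    rw [hset, Subgroup.closure_eq]
  rw [hUeq, hW]
  set Sq : Subgroup Kˣ := (powMonoidHom 2 : Kˣ →* Kˣ).range with hSq
  set N : Subgroup Kˣ := A.principalUnitGroup ⊔ Sq with hN
  have hsup : A.unitGroup ⊔ Sq = A.unitGroup ⊔ N := by
    rw [hN, ← sup_assoc, sup_of_le_left A.principal_units_le_units]
  rw [hsup]
  -- the homomorphism to the residue-field units mod squares
  set F := A.unitGroupToResidueFieldUnits with hF
  set sqR : Subgroup (IsLocalRing.ResidueField A)ˣ :=
    (powMonoidHom 2 : (IsLocalRing.ResidueField A)ˣ →* _).range with hsqR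
  set φ : A.unitGroup →* ((IsLocalRing.ResidueField A)ˣ ⧸ sqR) :=
    (QuotientGroup.mk' sqR).comp F with hφ
  have hφsurj : Function.Surjective φ :=
    (QuotientGroup.mk'_surjective sqR).comp A.surjective_unitGroupToResidueFieldUnits
  have hker : φ.ker = N.subgroupOf A.unitGroup := by
    ext u
    constructor
    · intro hu
      have : F u ∈ sqR := by
        rwa [hφ, MonoidHom.mem_ker, MonoidHom.comp_apply, QuotientGroup.mk'_apply,
          QuotientGroup.eq_one_iff] at hu
      obtain ⟨y, hy⟩ := this
      obtain ⟨e', he'⟩ := A.surjective_unitGroupToResidueFieldUnits y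
      have hkey : u * (e' ^ 2)⁻¹ ∈ F.ker := by
        rw [MonoidHom.mem_ker, _root_.map_mul, map_inv, _root_.map_pow, he', ← hy]
        simp [powMonoidHom_apply]
      rw [A.ker_unitGroupToResidueFieldUnits, Subgroup.mem_comap] at hkey
      have : (u : Kˣ) ∈ N := by
        rw [hN, Subgroup.mem_sup]
        refine ⟨((u : Kˣ) * ((e' : Kˣ) ^ 2)⁻¹), hkey, (e' : Kˣ) ^ 2,
          ⟨(e' : Kˣ), rfl⟩, by group⟩
      exact this
    · intro hu
      have hu' : (u : Kˣ) ∈ N := hu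
      rw [hN, Subgroup.mem_sup] at hu'
      obtain ⟨w, hw, s, ⟨c, rfl⟩, hws⟩ := hu'
      simp only [powMonoidHom_apply] at hws
      -- `c ∈ A.unitGroup` since `v c ^ 2 = 1`
      have hwU : w ∈ A.unitGroup := A.principal_units_le_units hw
      have hc2 : c ^ 2 ∈ A.unitGroup := by
        have h : (c : Kˣ) ^ 2 = w⁻¹ * (u : Kˣ) := by
          rw [← hws]; group
        rw [h]
        exact A.unitGroup.mul_mem (A.unitGroup.inv_mem hwU) u.2
      have hcU : c ∈ A.unitGroup := by
        rw [Valuation.mem_unitGroup_iff] at hc2 ⊢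
        have h2 : (v (c : K)) ^ 2 = 1 := by
          rw [← _root_.map_pow]
          simpa using hc2
        rcases lt_trichotomy (v (c : K)) 1 with h | h | h
        · have h3 := pow_lt_one₀ (zero_le') h two_ne_zero
          exact absurd h2 h3.ne
        · exact h
        · have h3 := one_lt_pow₀ h two_ne_zero
          exact absurd h2 h3.ne'
      have huw : u = ⟨w, hwU⟩ * ⟨c, hcU⟩ ^ 2 := by
        apply Subtype.ext
        simpa using hws.symm
      have hFw : F ⟨w, hwU⟩ = 1 := by
        have h : (⟨w, hwU⟩ : A.unitGroup) ∈ F.ker := by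
          rw [A.ker_unitGroupToResidueFieldUnits, Subgroup.mem_comap]
          exact hw
        rwa [MonoidHom.mem_ker] at h
      have hFu : F u = (F ⟨c, hcU⟩) ^ 2 := by
        rw [huw, _root_.map_mul, _root_.map_pow, hFw, one_mul]
      rw [MonoidHom.mem_ker, hφ, MonoidHom.comp_apply, QuotientGroup.mk'_apply,
        QuotientGroup.eq_one_iff, hFu]
      exact ⟨F ⟨c, hcU⟩, rfl⟩
  -- assemble the isomorphism
  let e1 : (A.unitGroup ⧸ N.subgroupOf A.unitGroup) ≃*
      ((IsLocalRing.ResidueField A)ˣ ⧸ sqR) :=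
    (QuotientGroup.quotientMulEquivOfEq hker.symm).trans
      (QuotientGroup.quotientKerEquivOfSurjective φ hφsurj)
  let e2 := QuotientGroup.quotientInfEquivProdNormalQuotient A.unitGroup N
  refine ⟨e2.symm.trans e1, ?_⟩
  intro x hx hmem y hy
  have hxU : x ∈ A.unitGroup := by rw [Valuation.mem_unitGroup_iff]; exact hx
  have he2 : e2 (QuotientGroup.mk ⟨x, hxU⟩) = QuotientGroup.mk ⟨x, hmem⟩ := rfl
  have hsymm : e2.symm (QuotientGroup.mk ⟨x, hmem⟩) = QuotientGroup.mk ⟨x, hxU⟩ := by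
    rw [← he2, MulEquiv.symm_apply_apply]
  rw [MulEquiv.trans_apply, hsymm]
  have he1 : e1 (QuotientGroup.mk ⟨x, hxU⟩) = φ ⟨x, hxU⟩ := rfl
  rw [he1]
  have hFy : F ⟨x, hxU⟩ = y := by
    ext
    rw [hF, A.coe_unitGroupToResidueFieldUnits_apply, hy]
    have h : ((A.unitGroupMulEquiv ⟨x, hxU⟩ : A)) =
        (⟨(x : K), (v.mem_valuationSubring_iff _).mpr hx.le⟩ : A) :=
      Subtype.ext (A.coe_unitGroupMulEquiv_apply _)
    rw [h]
    rfl
  rw [hφ, MonoidHom.comp_apply, hFy]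
  rfl
end

section
/- Let K be a field, v and w two inequivalent discrete rank-one valuations on K with char of both residue fields ≠ 2, and x ∈ K* with x ∉ (1+M_v)K*² and x ∉ (1+M_w)K*². Suppose a ∈ K* satisfies v(a²) > v(x) and w(a²) < w(x). Then y := a² + x satisfies y ∉ K*² and y ∉ x·K*². -/
namespace Valuation

variable {K Γ₀ : Type*} [Field K] [LinearOrderedCommGroupWithZero Γ₀] (v : Valuation K Γ₀)

theorem exists_add_eq_mul_of_lt {x y : K} (h : v y < v x) :
    ∃ u : K, v (u - 1) < 1 ∧ x + y = x * u := by
  have hx : x ≠ 0 := v.ne_zero_iff.mp (zero_le.trans_lt h).ne'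
  refine ⟨1 + y / x, ?_, by field_simp⟩
  rwa [add_sub_cancel_left, map_div₀, div_lt_one₀ (v.pos_iff.mpr hx)]

theorem map_inv_sub_one_lt_one {u : K} (hu : v (u - 1) < 1) : v (u⁻¹ - 1) < 1 := by
  have hvu : v u = 1 := by simpa using v.map_one_add_of_lt hu
  have hu0 : u ≠ 0 := v.ne_zero_iff.mp (by simp [hvu])
  have : u⁻¹ - 1 = -(u - 1) / u := by field_simp; ring
  rwa [this, map_div₀, Valuation.map_neg, hvu, div_one]

end Valuation

theorem stmt_19_general {K : Type*} [Field K]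
    (v w : Valuation K (WithZero (Multiplicative ℤ)))
    (x : K)
    (hxv : ¬ ∃ u c : K, c ≠ 0 ∧ v (u - 1) < 1 ∧ x = u * c ^ 2)
    (hxw : ¬ ∃ u c : K, c ≠ 0 ∧ w (u - 1) < 1 ∧ x = u * c ^ 2)
    (a : K)
    (hav : v (a ^ 2) < v x) (haw : w x < w (a ^ 2)) :
    (¬ ∃ c : K, c ≠ 0 ∧ a ^ 2 + x = c ^ 2) ∧
    (¬ ∃ c : K, c ≠ 0 ∧ a ^ 2 + x = x * c ^ 2) := by
  constructor
  · rintro ⟨c, hc, hy⟩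
    obtain ⟨u, hu, hxu⟩ := v.exists_add_eq_mul_of_lt hav
    have hu0 : u ≠ 0 := by rintro rfl; simp at hu
    refine hxv ⟨u⁻¹, c, hc, v.map_inv_sub_one_lt_one hu, ?_⟩
    field_simp
    linear_combination hy - hxu
  · rintro ⟨c, hc, hy⟩
    obtain ⟨u, hu, hau⟩ := w.exists_add_eq_mul_of_lt haw
    have ha : a ≠ 0 := by rintro rfl; simp at haw
    refine hxw ⟨u, a / c, div_ne_zero ha hc, hu, ?_⟩
    field_simp
    linear_combination hau - hy

/-- Setup of two inequivalent discrete rank-one valuations `v, w` with residue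
characteristic `≠ 2`: if `x ∉ (1+M_v)K*²`, `x ∉ (1+M_w)K*²`, and `a` satisfies
`v(a²) > v(x)` and `w(a²) < w(x)` (additively), then `y = a² + x` is neither in
`K*²` nor in `x·K*²`. -/
theorem stmt_19 {K : Type*} [Field K]
    (v w : Valuation K (WithZero (Multiplicative ℤ)))
    (hvs : Function.Surjective v) (hws : Function.Surjective w)
    (hne : ¬ v.IsEquiv w)
    (hv2 : v (2 : K) = 1) (hw2 : w (2 : K) = 1)
    (x : K) (hx : x ≠ 0)
    (hxv : ¬ ∃ u c : K, c ≠ 0 ∧ v (u - 1) < 1 ∧ x = u * c ^ 2)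
    (hxw : ¬ ∃ u c : K, c ≠ 0 ∧ w (u - 1) < 1 ∧ x = u * c ^ 2)
    (a : K) (ha : a ≠ 0)
    (hav : v (a ^ 2) < v x) (haw : w x < w (a ^ 2)) :
    (¬ ∃ c : K, c ≠ 0 ∧ a ^ 2 + x = c ^ 2) ∧
    (¬ ∃ c : K, c ≠ 0 ∧ a ^ 2 + x = x * c ^ 2) :=
  stmt_19_general v w x hxv hxw a hav haw
end
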